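/- arXiv:2311.15699 — 2 statements merged into one kernel-verified Lean document; each statement's English description precedes it below -/
import Mathlib

section
/- Let y = (y_1, y_2, ..., y_n) be a vector of n positive integer car lengths. The image of the degree function deg : PAinv_n(y) → {0, 1, ..., n−1} is exactly {0, 1, ..., χ(y)}; that is, for every d with 0 ≤ d ≤ χ(y), there exists x ∈ PAinv_n(y) with deg x = d. -/
/-- Car with preference `pref` and length `len` fits at spot `s`:
`pref ≤ s`, the spots `s, s+1, ..., s+len-1` all lie in the lot `[1, m]`,
and none of them is occupied. -/
def FitsAt (occ : Finset ℕ) (m pref len s : ℕ) : Prop :=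
  pref ≤ s ∧ s + len ≤ m + 1 ∧ ∀ t ∈ Finset.Ico s (s + len), t ∉ occ

/-- The car parks at `s`: `s` is the least spot (≥ its preference) where it fits. -/
def ParksAt (occ : Finset ℕ) (m pref len s : ℕ) : Prop :=
  FitsAt occ m pref len s ∧ ∀ s' < s, ¬ FitsAt occ m pref len s'

/-- Every car in the list of (preference, length) pairs can park, with
cars entering in order, starting from the set `occ` of occupied spots. -/
inductive Park (m : ℕ) : Finset ℕ → List (ℕ × ℕ) → Prop
  | nil (occ : Finset ℕ) : Park m occ []
  | cons (occ : Finset ℕ) (pref len : ℕ) (rest : List (ℕ × ℕ)) (s : ℕ) :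
      ParksAt occ m pref len s →
      Park m (occ ∪ Finset.Ico s (s + len)) rest →
      Park m occ ((pref, len) :: rest)

/-- `x` is a parking assortment for the length vector `y`. -/
def PA (y x : List ℕ) : Prop :=
  x.length = y.length ∧ (∀ v ∈ x, 1 ≤ v ∧ v ≤ y.sum) ∧ Park y.sum ∅ (x.zip y)

/-- `x` is a (permutation) invariant parking assortment for `y`. -/
def PAinv (y x : List ℕ) : Prop :=
  ∀ x' : List ℕ, x.Perm x' → PA y x'

/-- The degree of `x`: the number of entries of `x` different from 1. -/
def deg (x : List ℕ) : ℕ := (x.filter (fun v => v ≠ 1)).length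

/-- The characteristic of `y`: the greatest degree over all invariant
parking assortments for `y`. -/
noncomputable def chi (y : List ℕ) : ℕ := sSup {d | ∃ x, PAinv y x ∧ deg x = d}

/-- The invariant solution set of `y`. -/
def Wset (y : List ℕ) : Set ℕ :=
  {w | PAinv y (List.replicate (y.length - 1) 1 ++ [w])}

/-!
Degree zero is attained by the all-ones assortment, and the degrees of invariant assortments are
bounded by `n`, so it suffices to lower the degree of any `x ∈ PAinv_n(y)` by one. Replace the least
entry `w ≠ 1` of `x` by `1`. In any order of the new preferences, a car preceding the new `1` parks
exactly as in the corresponding order of `x`. When the new `1` is first among the remaining cars and no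
other `1` remains, every remaining preference is `≥ w`; since these cars fill the street and never park
before their preference, all spots `< w` are already taken, so preferring `1` instead of `w` changes
nothing.
-/

theorem ParksAt.unique {occ : Finset ℕ} {m p l s t : ℕ}
    (hs : ParksAt occ m p l s) (ht : ParksAt occ m p l t) : s = t := by
  rcases lt_trichotomy s t with h | h | h
  · exact absurd hs.1 (ht.2 s h)
  · exact h
  · exact absurd ht.1 (hs.2 t h)

theorem ParksAt.of_occupied_between {occ : Finset ℕ} {m p w l s : ℕ} (hl : 1 ≤ l)
    (hpw : p ≤ w) (hocc : ∀ j, p ≤ j → j < w → j ∈ occ) (h : ParksAt occ m w l s) :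
    ParksAt occ m p l s := by
  obtain ⟨⟨hws, hsl, hfree⟩, hmin⟩ := h
  refine ⟨⟨hpw.trans hws, hsl, hfree⟩, fun s' hs' ⟨hps', hs'l, hfree'⟩ => ?_⟩
  by_cases hws' : w ≤ s'
  · exact hmin s' hs' ⟨hws', hs'l, hfree'⟩
  · exact hfree' s' (by simp only [Finset.mem_Ico]; omega) (hocc s' hps' (by omega))

theorem FitsAt.block_subset {occ : Finset ℕ} {m p l s : ℕ} (h : FitsAt occ m p l s)
    (hp : 1 ≤ p) : Finset.Ico s (s + l) ⊆ Finset.Icc 1 m := by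
  obtain ⟨hps, hsl, -⟩ := h
  intro t ht
  simp only [Finset.mem_Ico, Finset.mem_Icc] at ht ⊢
  omega

theorem FitsAt.card_union {occ : Finset ℕ} {m p l s : ℕ} (h : FitsAt occ m p l s) :
    (occ ∪ Finset.Ico s (s + l)).card = occ.card + l := by
  rw [Finset.card_union_of_disjoint (Finset.disjoint_right.2 h.2.2), Nat.card_Ico,
    Nat.add_sub_cancel_left]

theorem Park.cons_iff {m : ℕ} {occ : Finset ℕ} {p l : ℕ} {rest : List (ℕ × ℕ)} :
    Park m occ ((p, l) :: rest) ↔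
      ∃ s, ParksAt occ m p l s ∧ Park m (occ ∪ Finset.Ico s (s + l)) rest := by
  constructor
  · rintro (_ | ⟨_, _, _, _, s, hs, hrest⟩)
    exact ⟨s, hs, hrest⟩
  · rintro ⟨s, hs, hrest⟩
    exact Park.cons _ _ _ _ s hs hrest

theorem Park.cons_iff_of_parksAt {m : ℕ} {occ : Finset ℕ} {p l s : ℕ} {rest : List (ℕ × ℕ)}
    (hs : ParksAt occ m p l s) :
    Park m occ ((p, l) :: rest) ↔ Park m (occ ∪ Finset.Ico s (s + l)) rest := by
  rw [Park.cons_iff]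
  constructor
  · rintro ⟨s', hs', hrest⟩
    rwa [hs'.unique hs] at hrest
  · exact fun hrest => ⟨s, hs, hrest⟩

/-- Cars never park before their preference, so if cars preferring spots `≥ w` fill the rest of the
street, the spots below `w` were occupied from the start. -/
theorem Park.mem_of_lt_of_forall_le {m w : ℕ} (hw : 1 ≤ w) {Q L : List ℕ} {occ : Finset ℕ}
    (hlen : Q.length = L.length) (hocc : occ ⊆ Finset.Icc 1 m) (hcard : occ.card + L.sum = m)
    (hQ : ∀ q ∈ Q, w ≤ q) (hpark : Park m occ (Q.zip L)) {j : ℕ} (hj : 1 ≤ j) (hjm : j ≤ m)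
    (hjw : j < w) : j ∈ occ := by
  induction Q generalizing L occ with
  | nil =>
    obtain rfl : L = [] := List.length_eq_zero_iff.1 hlen.symm
    have : occ = Finset.Icc 1 m :=
      Finset.eq_of_subset_of_card_le hocc (by simp only [List.sum_nil] at hcard; simp; omega)
    simp only [this, Finset.mem_Icc]
    omega
  | cons q Q ih =>
    obtain _ | ⟨l, L⟩ := L
    · simp at hlen
    rw [List.zip_cons_cons, Park.cons_iff] at hpark
    obtain ⟨s, ⟨hfit, -⟩, hrest⟩ := hpark
    have hws : w ≤ s := (hQ q List.mem_cons_self).trans hfit.1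
    have hmem := ih (by simpa using hlen)
      (Finset.union_subset hocc (hfit.block_subset (hw.trans (hQ q List.mem_cons_self))))
      (by rw [hfit.card_union]; simp only [List.sum_cons] at hcard; omega)
      (fun q' hq' => hQ q' (List.mem_cons_of_mem q hq')) hrest
    rcases Finset.mem_union.1 hmem with h | h
    · exact h
    · simp only [Finset.mem_Ico] at h
      omega

theorem Park.parksAt_one_of_forall_le {m w l s : ℕ} (hw : 1 ≤ w) (hl : 1 ≤ l) {Q L : List ℕ}
    {occ : Finset ℕ} (hlen : Q.length = L.length) (hocc : occ ⊆ Finset.Icc 1 m)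
    (hcard : occ.card + (l + L.sum) = m) (hQ : ∀ q ∈ Q, w ≤ q)
    (hpark : Park m occ ((w, l) :: Q.zip L)) (hs : ParksAt occ m w l s) : ParksAt occ m 1 l s := by
  refine hs.of_occupied_between hl hw fun j hj hjw => ?_
  obtain ⟨⟨hws, hsl, -⟩, -⟩ := hs
  refine Park.mem_of_lt_of_forall_le hw (Q := w :: Q) (L := l :: L) (by simpa using hlen) hocc
    hcard ?_ hpark hj (by omega) hjw
  rintro q (_ | ⟨_, hq⟩)
  exacts [le_rfl, hQ q hq]

def ParksInAnyOrder (m : ℕ) (occ : Finset ℕ) (P L : List ℕ) : Prop :=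
  ∀ P', P.Perm P' → Park m occ (P'.zip L)

theorem ParksInAnyOrder.one_cons {m w : ℕ} (hw : 1 ≤ w) {L P : List ℕ} {occ : Finset ℕ}
    (hL : ∀ v ∈ L, 1 ≤ v) (hlen : P.length + 1 = L.length) (hocc : occ ⊆ Finset.Icc 1 m)
    (hcard : occ.card + L.sum = m) (hP : ∀ q ∈ P, q = 1 ∨ w ≤ q)
    (h : ParksInAnyOrder m occ (w :: P) L) : ParksInAnyOrder m occ (1 :: P) L := by
  induction L generalizing P occ with
  | nil => simp at hlen
  | cons l L ih =>
  rintro (_ | ⟨q, R⟩) hperm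
  · exact absurd hperm.length_eq (by simp)
  rw [List.zip_cons_cons]
  by_cases hqP : q ∈ P
  -- the first car parks as in `q :: w :: P.erase q`, which leaves the same problem one car shorter
  · have hq_first : (w :: P).Perm (q :: w :: P.erase q) :=
      ((List.perm_cons_erase hqP).cons w).trans (List.Perm.swap q w _)
    have hR : (1 :: P.erase q).Perm R :=
      (hperm.symm.trans (((List.perm_cons_erase hqP).cons 1).trans (.swap q 1 _))).cons_inv.symm
    obtain ⟨t, ht, -⟩ := Park.cons_iff.1 (h _ hq_first)
    have hq : 1 ≤ q := (hP q hqP).elim (·.ge) hw.trans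
    have hlen' : (P.erase q).length + 1 = L.length := by
      rw [List.length_erase_of_mem hqP]
      have := List.length_pos_of_mem hqP
      simp only [List.length_cons] at hlen
      omega
    rw [Park.cons_iff_of_parksAt ht]
    refine ih (fun v hv => hL v (List.mem_cons_of_mem l hv)) hlen'
      (Finset.union_subset hocc (ht.1.block_subset hq))
      (by rw [ht.1.card_union]; simp only [List.sum_cons] at hcard; omega)
      (fun q' hq' => hP q' (List.mem_of_mem_erase hq')) (fun R' hR' => ?_) R hR
    have hpark' := h (q :: R') (hq_first.trans (hR'.cons q))
    rwa [List.zip_cons_cons, Park.cons_iff_of_parksAt ht] at hpark'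
  · obtain rfl : q = 1 := by
      simpa [hqP] using hperm.symm.subset (List.mem_cons_self (a := q) (l := R))
    have hpark := h (w :: P) (.refl _)
    obtain ⟨s, hs, -⟩ := Park.cons_iff.1 hpark
    have hs1 : ParksAt occ m 1 l s :=
      Park.parksAt_one_of_forall_le hw (hL l List.mem_cons_self) (by simpa using hlen) hocc hcard
        (fun q' hq' => (hP q' hq').resolve_left (by rintro rfl; exact hqP hq')) hpark hs
    have hpark' := h (w :: R) (hperm.cons_inv.cons w)
    rwa [List.zip_cons_cons, Park.cons_iff_of_parksAt hs, ← Park.cons_iff_of_parksAt hs1]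
      at hpark'

theorem park_replicate_one {m : ℕ} {L : List ℕ} {c : ℕ} (hL : ∀ v ∈ L, 1 ≤ v)
    (hsum : c + L.sum ≤ m) : Park m (Finset.Icc 1 c) ((List.replicate L.length 1).zip L) := by
  induction L generalizing c with
  | nil => exact Park.nil _
  | cons l L ih =>
    have hl : 1 ≤ l := hL l List.mem_cons_self
    simp only [List.sum_cons] at hsum
    have hs : ParksAt (Finset.Icc 1 c) m 1 l (c + 1) := by
      refine ⟨⟨by omega, by omega, fun t ht => ?_⟩, ?_⟩
      · simp only [Finset.mem_Ico, Finset.mem_Icc] at ht ⊢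
        omega
      · rintro s' hs' ⟨h1, -, hfree⟩
        exact hfree s' (by simp only [Finset.mem_Ico]; omega) (by simp only [Finset.mem_Icc]; omega)
    have hunion : Finset.Icc 1 c ∪ Finset.Ico (c + 1) (c + 1 + l) = Finset.Icc 1 (c + l) := by
      ext t
      simp only [Finset.mem_Icc, Finset.mem_Ico, Finset.mem_union]
      omega
    rw [List.length_cons, List.replicate_succ, List.zip_cons_cons, Park.cons_iff_of_parksAt hs,
      hunion]
    exact ih (fun v hv => hL v (List.mem_cons_of_mem l hv)) (by omega)

theorem PAinv_replicate_one {y : List ℕ} (hy : ∀ v ∈ y, 0 < v) :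
    PAinv y (List.replicate y.length 1) := by
  intro x hperm
  obtain rfl := List.perm_replicate.1 hperm.symm
  refine ⟨by simp, fun v hv => ?_, by simpa using park_replicate_one (c := 0) hy le_rfl⟩
  obtain ⟨hlen, rfl⟩ := List.mem_replicate.1 hv
  obtain ⟨a, t, rfl⟩ := List.exists_cons_of_length_pos (Nat.pos_of_ne_zero hlen)
  have := hy a List.mem_cons_self
  simp only [List.sum_cons]
  omega

theorem PAinv.perm {y x x' : List ℕ} (h : PAinv y x) (hp : x.Perm x') : PAinv y x' :=
  fun x'' hp' => h x'' (hp.trans hp')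

theorem PAinv.one_cons {y P : List ℕ} {w : ℕ} (hy : ∀ v ∈ y, 0 < v) (h : PAinv y (w :: P))
    (hP : ∀ q ∈ P, q = 1 ∨ w ≤ q) : PAinv y (1 :: P) := by
  obtain ⟨hlen, hbound, -⟩ := h _ (.refl _)
  have hw := hbound w List.mem_cons_self
  intro x hperm
  refine ⟨by rw [← hperm.length_eq, ← hlen, List.length_cons, List.length_cons], fun v hv => ?_,
    ParksInAnyOrder.one_cons hw.1 hy (by simpa using hlen) (Finset.empty_subset _)
      (by simp) hP (fun x' hx' => (h x' hx').2.2) x hperm⟩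
  rcases List.mem_cons.1 (hperm.symm.subset hv) with rfl | hv
  · exact ⟨le_rfl, hw.1.trans hw.2⟩
  · exact hbound v (List.mem_cons_of_mem w hv)

theorem deg_cons_one (x : List ℕ) : deg (1 :: x) = deg x := by
  simp [deg]

theorem deg_cons_of_ne_one {w : ℕ} (x : List ℕ) (hw : w ≠ 1) : deg (w :: x) = deg x + 1 := by
  simp [deg, hw]

theorem List.Perm.deg_eq {x x' : List ℕ} (h : x.Perm x') : deg x = deg x' :=
  (h.filter _).length_eq

theorem deg_replicate_one (k : ℕ) : deg (List.replicate k 1) = 0 := by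
  simp [deg]

theorem deg_le_length (x : List ℕ) : deg x ≤ x.length :=
  List.length_filter_le _ _

theorem PAinv.exists_deg_eq {y x : List ℕ} {d : ℕ} (hy : ∀ v ∈ y, 0 < v) (h : PAinv y x)
    (hdeg : deg x = d + 1) : ∃ x', PAinv y x' ∧ deg x' = d := by
  classical
  have hex : ∃ w, w ∈ x ∧ w ≠ 1 := by
    obtain ⟨w, hw⟩ := List.exists_mem_of_length_pos (l := x.filter (· ≠ 1))
      (by rw [← deg, hdeg]; omega)
    exact ⟨w, by simpa using hw⟩
  obtain ⟨hwx, hw1⟩ := Nat.find_spec hex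
  have hxperm := List.perm_cons_erase hwx
  refine ⟨1 :: x.erase (Nat.find hex), (h.perm hxperm).one_cons hy fun q hq => ?_, ?_⟩
  · exact (eq_or_ne q 1).imp_right fun hq1 => Nat.find_min' hex ⟨List.mem_of_mem_erase hq, hq1⟩
  · rw [hxperm.deg_eq, deg_cons_of_ne_one _ hw1] at hdeg
    rw [deg_cons_one]
    omega

theorem Set.eq_Iic_csSup_of_pred_mem {S : Set ℕ} (hne : S.Nonempty) (hbdd : BddAbove S)
    (hpred : ∀ d, d + 1 ∈ S → d ∈ S) : S = Set.Iic (sSup S) := by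
  ext d
  refine ⟨fun hd => le_csSup hbdd hd, fun hd => ?_⟩
  exact Nat.decreasingInduction (motive := fun k _ => k ∈ S) (fun k _ hk => hpred k hk)
    (Nat.sSup_mem hne hbdd) hd

theorem stmt11_general (y : List ℕ)
    (hypos : ∀ v ∈ y, 0 < v) :
    {d : ℕ | ∃ x, PAinv y x ∧ deg x = d} = Set.Iic (chi y) := by
  refine Set.eq_Iic_csSup_of_pred_mem
    ⟨0, _, PAinv_replicate_one hypos, deg_replicate_one _⟩ ⟨y.length, ?_⟩ ?_
  · rintro _ ⟨x, hx, rfl⟩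
    exact (deg_le_length x).trans (hx x (.refl x)).1.le
  · rintro d ⟨x, hx, hdeg⟩
    exact hx.exists_deg_eq hypos hdeg

/-- the image of `deg` on `PAinv_n(y)` is exactly `{0, 1, …, χ(y)}`. -/
theorem stmt11 (n : ℕ) (hn : 0 < n) (y : List ℕ) (hylen : y.length = n)
    (hypos : ∀ v ∈ y, 0 < v) :
    {d : ℕ | ∃ x, PAinv y x ∧ deg x = d} = Set.Iic (chi y) :=
  stmt11_general y hypos
end

section
/- Let y = (y_1, ..., y_n) be a vector of n positive integer car lengths. Then W(y) ⊆ {1 + b·y : b ∈ {0} × {0,1}^{n−1}}, i.e., every w ∈ W(y) can be written as w = 1 + Σ_{j=2}^{n} b_j y_j for some b_2, ..., b_n ∈ {0,1}. Consequently, |W(y)| ≤ 2^{n−1}. -/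
/-!
The first car parks at its preferred spot w and occupies [w, w + y₁). Every other car prefers
spot 1 and so takes the first free stretch long enough for it: either the next piece of the gap
[1, w), or the end of the occupied block starting at w. Since the lengths add up to the size of
the lot, the gap is filled exactly, so w - 1 is the total length of some of the cars 2, …, n.
-/

open Finset

section Parking

variable {occ : Finset ℕ} {m pref len s t : ℕ}

theorem ParksAt.eq_of_fitsAt (h : ParksAt occ m pref len s) (ht : FitsAt occ m pref len t)
    (hlt : ∀ s' < t, ¬ FitsAt occ m pref len s') : s = t :=
  le_antisymm (not_lt.1 fun hts => h.2 t hts ht) (not_lt.1 fun hst => hlt s hst h.1)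

theorem not_fitsAt_of_mem (ht : t ∈ occ) (hst : s ≤ t) (hts : t < s + len) :
    ¬ FitsAt occ m pref len s :=
  fun h => h.2.2 t (mem_Ico.2 ⟨hst, hts⟩) ht

theorem ParksAt.eq_pref_of_empty (h : ParksAt ∅ m pref len s) : s = pref :=
  h.eq_of_fitsAt ⟨le_rfl, by have := h.1.1; have := h.1.2.1; omega, by simp⟩
    fun _ hs' hfit => absurd hfit.1 (not_le.2 hs')

variable {p w q l : ℕ}

theorem ParksAt.eq_gap_start (h : ParksAt (Ico 1 p ∪ Ico w q) m 1 l s) (hl : 0 < l)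
    (hp : 1 ≤ p) (hlw : p + l ≤ w) (hwm : w ≤ m + 1) : s = p :=
  h.eq_of_fitsAt
    ⟨hp, by omega, fun t ht => by simp only [mem_Ico, mem_union] at ht ⊢; omega⟩
    fun s' hs' hfit => not_fitsAt_of_mem (t := s')
      (by simp only [mem_union, mem_Ico]; have := hfit.1; omega) le_rfl (by omega) hfit

theorem ParksAt.eq_block_end (h : ParksAt (Ico 1 p ∪ Ico w q) m 1 l s)
    (hpw : p ≤ w) (hwl : w < p + l) (hwq : w < q) : s = q := by
  have hbelow : ∀ s' < q, ¬ FitsAt (Ico 1 p ∪ Ico w q) m 1 l s' := by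
    intro s' hs' hfit
    have h1 := hfit.1
    by_cases hgap : p ≤ s' ∧ s' < w
    · exact not_fitsAt_of_mem (t := w) (by simp only [mem_union, mem_Ico]; omega)
        (by omega) (by omega) hfit
    · exact not_fitsAt_of_mem (t := s') (by simp only [mem_union, mem_Ico]; omega)
        le_rfl (by omega) hfit
  have hqs : q ≤ s := not_lt.1 fun hsq => hbelow s hsq h.1
  exact h.eq_of_fitsAt
    ⟨by omega, by have := h.1.2.1; omega,
      fun t ht => by simp only [mem_Ico, mem_union] at ht ⊢; omega⟩ hbelow

end Parking

/-- The occupied spots stay of the form `[1, p) ∪ [w, q)`: the filled start of the gap in front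
of the first car, and the block grown from the first car. -/
theorem exists_sublist_sum_eq_of_park_one {m w : ℕ} {L : List ℕ} (hL : ∀ l ∈ L, 0 < l) :
    ∀ {p q : ℕ}, 1 ≤ p → p ≤ w → w < q → q ≤ m + 1 →
      L.sum = (w - p) + (m + 1 - q) →
      Park m (Ico 1 p ∪ Ico w q) (L.map (1, ·)) → ∃ S : List ℕ, S.Sublist L ∧ p + S.sum = w := by
  induction L with
  | nil =>
    intro p q _ hpw _ _ hsum _
    exact ⟨[], List.Sublist.slnil, by simp only [List.sum_nil] at hsum ⊢; omega⟩
  | cons l L ih =>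
    intro p q hp hpw hwq hq hsum hpark
    have hl : 0 < l := hL l List.mem_cons_self
    have hL' : ∀ l ∈ L, 0 < l := fun l hl => hL l (List.mem_cons_of_mem _ hl)
    rw [List.sum_cons] at hsum
    rcases hpark with _ | ⟨_, _, _, _, s, hs, hrest⟩
    by_cases hfits : p + l ≤ w
    · obtain rfl := hs.eq_gap_start hl hp hfits (by omega)
      rw [union_right_comm, Ico_union_Ico_eq_Ico hp (by omega)] at hrest
      obtain ⟨S, hS, hSsum⟩ := ih hL' (by omega) hfits hwq hq (by omega) hrest
      exact ⟨l :: S, hS.cons_cons l, by rw [List.sum_cons]; omega⟩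
    · obtain rfl := hs.eq_block_end hpw (by omega) hwq
      have hsl : s + l ≤ m + 1 := hs.1.2.1
      rw [union_assoc, Ico_union_Ico_eq_Ico hwq.le (by omega)] at hrest
      obtain ⟨S, hS, hSsum⟩ := ih hL' hp hpw (by omega) hsl (by omega) hrest
      exact ⟨S, hS.cons l, hSsum⟩

theorem List.zip_replicate_length_left {α β : Type*} (a : α) (L : List β) :
    (replicate L.length a).zip L = L.map (a, ·) := by
  induction L with
  | nil => rfl
  | cons b L ih => simp [replicate_succ, ih]

theorem exists_sublist_of_mem_Wset {a w : ℕ} {L : List ℕ} (ha : 0 < a) (hL : ∀ l ∈ L, 0 < l)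
    (hw : w ∈ Wset (a :: L)) : ∃ S : List ℕ, S.Sublist L ∧ 1 + S.sum = w := by
  obtain ⟨-, hbound, hpark⟩ : PA (a :: L) (w :: List.replicate L.length 1) := by
    simpa using hw _ List.perm_append_comm
  have hw1 : 1 ≤ w := (hbound w List.mem_cons_self).1
  rw [List.zip_cons_cons, List.zip_replicate_length_left] at hpark
  rcases hpark with _ | ⟨_, _, _, _, s, hs, hrest⟩
  obtain rfl := hs.eq_pref_of_empty
  have hsa : s + a ≤ (a :: L).sum + 1 := hs.1.2.1
  have hm : (a :: L).sum = a + L.sum := List.sum_cons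
  rw [← Ico_self 1] at hrest
  exact exists_sublist_sum_eq_of_park_one hL le_rfl hw1 (by omega) hsa (by omega) hrest

theorem sum_map_succ_getD_cons {M : Type*} [AddCommMonoid M] (a : M) (L : List M)
    (T : Finset ℕ) :
    ∑ j ∈ T.map (addRightEmbedding 1), (a :: L).getD j 0 = ∑ j ∈ T, L.getD j 0 := by
  simp [sum_map]

theorem List.Sublist.exists_sum_eq_sum_getD {M : Type*} [AddCommMonoid M] {S L : List M}
    (h : S.Sublist L) : ∃ T ⊆ Finset.range L.length, S.sum = ∑ j ∈ T, L.getD j 0 := by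
  induction h with
  | slnil => exact ⟨∅, by simp⟩
  | cons a _ ih =>
    obtain ⟨T, hT, hsum⟩ := ih
    refine ⟨T.map (addRightEmbedding 1), fun j hj => ?_, by rw [sum_map_succ_getD_cons, hsum]⟩
    obtain ⟨k, hk, rfl⟩ := Finset.mem_map.1 hj
    simpa using hT hk
  | cons_cons a _ ih =>
    obtain ⟨T, hT, hsum⟩ := ih
    refine ⟨insert 0 (T.map (addRightEmbedding 1)), fun j hj => ?_, ?_⟩
    · rcases Finset.mem_insert.1 hj with rfl | hj
      · simp
      · obtain ⟨k, hk, rfl⟩ := Finset.mem_map.1 hj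
        simpa using hT hk
    · rw [Finset.sum_insert (by simp), sum_map_succ_getD_cons, List.sum_cons, hsum]
      rfl

theorem exists_subset_Ico_of_mem_Wset {y : List ℕ} (hy : ∀ v ∈ y, 0 < v) {w : ℕ}
    (hw : w ∈ Wset y) : ∃ S ⊆ Ico 1 y.length, w = 1 + ∑ j ∈ S, y.getD j 0 := by
  cases y with
  | nil => simpa [Wset, PAinv, PA] using hw [w] (List.Perm.refl _)
  | cons a L =>
    obtain ⟨S, hS, rfl⟩ := exists_sublist_of_mem_Wset (hy a List.mem_cons_self)
      (fun l hl => hy l (List.mem_cons_of_mem _ hl)) hw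
    obtain ⟨T, hT, hsum⟩ := hS.exists_sum_eq_sum_getD
    refine ⟨T.map (addRightEmbedding 1), fun j hj => ?_, by rw [sum_map_succ_getD_cons, hsum]⟩
    obtain ⟨k, hk, rfl⟩ := mem_map.1 hj
    simpa using hT hk

theorem Set.ncard_le_two_pow_of_forall_exists_subset {α β : Type*} {A : Set β}
    (s : Finset α) (f : Finset α → β) (h : ∀ b ∈ A, ∃ S ⊆ s, b = f S) :
    A.ncard ≤ 2 ^ s.card :=
  calc A.ncard ≤ (f '' ↑s.powerset).ncard :=
        Set.ncard_le_ncard (fun b hb => by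
          obtain ⟨S, hS, rfl⟩ := h b hb
          exact ⟨S, Finset.mem_powerset.2 hS, rfl⟩) ((s.powerset.finite_toSet).image f)
    _ ≤ (↑s.powerset : Set (Finset α)).ncard := Set.ncard_image_le s.powerset.finite_toSet
    _ = 2 ^ s.card := by rw [Set.ncard_coe_finset, card_powerset]

theorem stmt16_general (n : ℕ) (y : List ℕ) (hylen : y.length = n)
    (hypos : ∀ v ∈ y, 0 < v) :
    (∀ w ∈ Wset y, ∃ S : Finset ℕ, S ⊆ Finset.Ico 1 n ∧
        w = 1 + ∑ j ∈ S, y.getD j 0) ∧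
      Set.ncard (Wset y) ≤ 2 ^ (n - 1) := by
  subst hylen
  have hW : ∀ w ∈ Wset y, ∃ S ⊆ Ico 1 y.length, w = 1 + ∑ j ∈ S, y.getD j 0 :=
    fun w hw => exists_subset_Ico_of_mem_Wset hypos hw
  refine ⟨hW, ?_⟩
  simpa using Set.ncard_le_two_pow_of_forall_exists_subset _ _ hW

/-- every `w ∈ W(y)` is of the form `1 + Σ_{j ∈ S} y_j` for some set
`S` of indices among `{2, …, n}` (0-based: `S ⊆ Ico 1 n`); hence `|W(y)| ≤ 2^{n−1}`. -/
theorem stmt16 (n : ℕ) (hn : 0 < n) (y : List ℕ) (hylen : y.length = n)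
    (hypos : ∀ v ∈ y, 0 < v) :
    (∀ w ∈ Wset y, ∃ S : Finset ℕ, S ⊆ Finset.Ico 1 n ∧
        w = 1 + ∑ j ∈ S, y.getD j 0) ∧
      Set.ncard (Wset y) ≤ 2 ^ (n - 1) :=
  stmt16_general n y hylen hypos
end
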